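/- arXiv:1702.06043 — 8 statements merged into one kernel-verified Lean document; each statement's English description precedes it below -/
import Mathlib

section
/- A pregeometry cl on X is locally modular (i.e. dim(A ∪ B) + dim(A ∩ B) = dim(A) + dim(B) for all finite-dimensional closed sets A, B with dim(A ∩ B) > 0) if and only if for every a ∈ X \ cl(∅) the localisation cl_{a} (defined by cl_{a}(A) = cl(A ∪ {a})) is modular. -/
universe u

def IsPregeometry {X : Type u} (cl : Set X → Set X) : Prop :=
  (∀ A, A ⊆ cl A) ∧
  (∀ A B : Set X, A ⊆ B → cl A ⊆ cl B) ∧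
  (∀ A, cl (cl A) = cl A) ∧
  (∀ (A : Set X) (a : X), a ∈ cl A → ∃ A₀, A₀ ⊆ A ∧ A₀.Finite ∧ a ∈ cl A₀) ∧
  (∀ (A : Set X) (a b : X), a ∈ cl (A ∪ {b}) → a ∉ cl A → b ∈ cl (A ∪ {a}))

def Indep {X : Type u} (cl : Set X → Set X) (B : Set X) : Prop :=
  ∀ a ∈ B, a ∉ cl (B \ {a})

def IsBasisOf {X : Type u} (cl : Set X → Set X) (B Y : Set X) : Prop :=
  B ⊆ Y ∧ Y ⊆ cl B ∧ Indep cl B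

def HasDim {X : Type u} (cl : Set X → Set X) (Y : Set X) (n : ℕ) : Prop :=
  ∃ B : Finset X, IsBasisOf cl ↑B Y ∧ B.card = n

def IsClosedSet {X : Type u} (cl : Set X → Set X) (A : Set X) : Prop := cl A = A

def IsModular {X : Type u} (cl : Set X → Set X) : Prop :=
  ∀ (A B : Set X) (m n p q : ℕ), IsClosedSet cl A → IsClosedSet cl B →
    HasDim cl A m → HasDim cl B n → HasDim cl (A ∪ B) p → HasDim cl (A ∩ B) q →
    p + q = m + n

def IsLocallyModular {X : Type u} (cl : Set X → Set X) : Prop :=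
  ∀ (A B : Set X) (m n p q : ℕ), IsClosedSet cl A → IsClosedSet cl B →
    HasDim cl A m → HasDim cl B n → HasDim cl (A ∪ B) p → HasDim cl (A ∩ B) q →
    0 < q → p + q = m + n

def InfiniteDim {X : Type u} (cl : Set X → Set X) : Prop :=
  ∀ A : Finset X, cl ↑A ≠ Set.univ

def AutInvariant {G : Type u} [Group G] (cl : Set G → Set G) : Prop :=
  ∀ (f : G ≃* G) (A : Set G), (⇑f) '' cl A = cl ((⇑f) '' A)

def Homogeneous {G : Type u} [Group G] (cl : Set G → Set G) : Prop :=
  InfiniteDim cl ∧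
  ∀ (A : Finset G) (b c : G), b ∉ cl ↑A → c ∉ cl ↑A →
    ∃ f : G ≃* G, (∀ a ∈ A, f a = a) ∧ f b = c

/-!
Fix `a ∉ cl ∅`. If `B` is a basis of `S ∋ a` for `cl_{a}`, then `a ∉ cl B`, so `B ∪ {a}` is a
basis of `S` for `cl`; as all `cl`-bases of `S` have the same size (Steinitz exchange),
`dim_{a} S = dim S - 1`. The closed sets of `cl_{a}` are the `cl`-closed sets containing `a`.
So modularity of `cl_{a}` is the modular law for closed `A`, `B` with `a ∈ A ∩ B`, and
`dim (A ∩ B) > 0` means that `A ∩ B` contains such an `a`: any element of a basis of `A ∩ B`.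
-/

variable {X : Type u} {cl : Set X → Set X}

def localization (cl : Set X → Set X) (a : X) : Set X → Set X := fun A => cl (A ∪ {a})

theorem localization_eq_of_mem {a : X} {S : Set X} (ha : a ∈ S) :
    localization cl a S = cl S := by
  rw [localization, Set.union_singleton, Set.insert_eq_of_mem ha]

namespace IsPregeometry

theorem subset_cl (hP : IsPregeometry cl) (A : Set X) : A ⊆ cl A := hP.1 A

theorem cl_mono (hP : IsPregeometry cl) {A B : Set X} (h : A ⊆ B) : cl A ⊆ cl B :=
  hP.2.1 A B h

theorem cl_cl (hP : IsPregeometry cl) (A : Set X) : cl (cl A) = cl A := hP.2.2.1 A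

theorem exists_finite_subset_of_mem_cl (hP : IsPregeometry cl) {A : Set X} {x : X}
    (hx : x ∈ cl A) : ∃ A₀ ⊆ A, A₀.Finite ∧ x ∈ cl A₀ :=
  hP.2.2.2.1 A x hx

theorem exchange (hP : IsPregeometry cl) {A : Set X} {x b : X} (hx : x ∈ cl (A ∪ {b}))
    (hxA : x ∉ cl A) : b ∈ cl (A ∪ {x}) :=
  hP.2.2.2.2 A x b hx hxA

theorem cl_subset_cl (hP : IsPregeometry cl) {A B : Set X} (h : A ⊆ cl B) : cl A ⊆ cl B :=
  (hP.cl_mono h).trans (hP.cl_cl B).le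

theorem mem_localization_self (hP : IsPregeometry cl) (a : X) (A : Set X) :
    a ∈ localization cl a A :=
  hP.subset_cl _ (Set.mem_union_right A (Set.mem_singleton a))

end IsPregeometry

theorem isPregeometry_localization (hP : IsPregeometry cl) (a : X) :
    IsPregeometry (localization cl a) := by
  refine ⟨fun A => Set.subset_union_left.trans (hP.subset_cl _),
    fun A B h => hP.cl_mono (Set.union_subset_union_left _ h), fun A => ?_, fun A x hx => ?_,
    fun A x b hx hxA => ?_⟩
  · rw [localization_eq_of_mem (hP.mem_localization_self a A)]
    exact hP.cl_cl _
  · obtain ⟨A₀, hA₀, hfin, hx₀⟩ := hP.exists_finite_subset_of_mem_cl hx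
    refine ⟨A₀ \ {a}, Set.sdiff_subset_iff.2 (by rwa [Set.union_comm]), hfin.sdiff, ?_⟩
    exact hP.cl_mono (by rw [Set.sdiff_union_self]; exact Set.subset_union_left) hx₀
  · rw [localization, Set.union_right_comm] at hx ⊢
    exact hP.exchange hx hxA

namespace Indep

theorem anti_cl {cl' : Set X → Set X} (hcl : ∀ A, cl A ⊆ cl' A) {B : Set X}
    (hB : Indep cl' B) : Indep cl B :=
  fun x hx hxB => hB x hx (hcl _ hxB)

theorem subset (hP : IsPregeometry cl) {B B' : Set X} (hB : Indep cl B) (h : B' ⊆ B) :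
    Indep cl B' :=
  fun x hx hxB => hB x (h hx) (hP.cl_mono (Set.sdiff_subset_sdiff_left h) hxB)

theorem notMem_cl_empty (hP : IsPregeometry cl) {B : Set X} (hB : Indep cl B) {x : X}
    (hx : x ∈ B) : x ∉ cl ∅ :=
  fun h => hB x hx (hP.cl_mono (Set.empty_subset _) h)

theorem insert_of_notMem_cl (hP : IsPregeometry cl) {I : Set X} {y : X} (hI : Indep cl I)
    (hy : y ∉ cl I) : Indep cl (insert y I) := by
  have hyI : y ∉ I := fun h => hy (hP.subset_cl I h)
  rintro z (rfl | hz) hzI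
  · rw [Set.insert_sdiff_self_of_notMem hyI] at hzI
    exact hy hzI
  · have hzy : z ≠ y := fun h => hyI (h ▸ hz)
    rw [Set.insert_sdiff_of_notMem _ (Set.notMem_singleton_iff.2 hzy.symm),
      ← Set.union_singleton] at hzI
    have hyz := hP.exchange hzI (hI z hz)
    rw [Set.sdiff_union_self, Set.union_singleton, Set.insert_eq_of_mem hz] at hyz
    exact hy hyz

theorem card_le_of_subset_cl (hP : IsPregeometry cl) {I J : Finset X} (hI : Indep cl ↑I)
    (hIJ : ↑I ⊆ cl ↑J) : I.card ≤ J.card := by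
  classical
  induction hn : (I \ J).card generalizing I with
  | zero =>
    exact Finset.card_le_card (Finset.sdiff_eq_empty_iff_subset.1 (Finset.card_eq_zero.1 hn))
  | succ n ih =>
    -- swap some `x ∈ I \ J` for some `y ∈ J` outside `cl (I \ {x})`
    obtain ⟨x, hx⟩ := Finset.card_pos.1 (by omega : 0 < (I \ J).card)
    obtain ⟨hxI, hxJ⟩ := Finset.mem_sdiff.1 hx
    have hxI' : x ∉ cl ↑(I.erase x) := by simpa only [Finset.coe_erase] using hI x hxI
    obtain ⟨y, hyJ, hy⟩ : ∃ y ∈ J, y ∉ cl ↑(I.erase x) := by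
      by_contra! h
      exact hxI' (hP.cl_subset_cl (fun y hy => h y hy) (hIJ hxI))
    have hyI : y ∉ I.erase x := fun h => hy (hP.subset_cl _ h)
    have hK : Indep cl ↑(insert y (I.erase x)) := by
      rw [Finset.coe_insert]
      exact (hI.subset hP (by simp)).insert_of_notMem_cl hP hy
    have hKJ : (↑(insert y (I.erase x)) : Set X) ⊆ cl ↑J := by
      rw [Finset.coe_insert, Set.insert_subset_iff]
      exact ⟨hP.subset_cl _ hyJ, (Finset.coe_subset.2 (Finset.erase_subset x I)).trans hIJ⟩
    have hKn : (insert y (I.erase x) \ J).card = n := by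
      rw [Finset.insert_sdiff_of_mem _ hyJ, Finset.erase_sdiff_comm,
        Finset.card_erase_of_mem hx, hn, Nat.add_sub_cancel]
    have := ih hK hKJ hKn
    rw [Finset.card_insert_of_notMem hyI, Finset.card_erase_of_mem hxI] at this
    have := Finset.card_pos.2 ⟨x, hxI⟩
    omega

end Indep

theorem IsBasisOf.card_eq (hP : IsPregeometry cl) {B C : Finset X} {Y : Set X}
    (hB : IsBasisOf cl ↑B Y) (hC : IsBasisOf cl ↑C Y) : B.card = C.card :=
  le_antisymm (hB.2.2.card_le_of_subset_cl hP (hB.1.trans hC.2.1))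
    (hC.2.2.card_le_of_subset_cl hP (hC.1.trans hB.2.1))

theorem IsPregeometry.exists_isBasisOf_subset (hP : IsPregeometry cl) {S : Finset X}
    {Y : Set X} (hSY : ↑S ⊆ Y) (hYS : Y ⊆ cl ↑S) : ∃ B ⊆ S, IsBasisOf cl ↑B Y := by
  classical
  induction S using Finset.strongInduction with
  | H S ih =>
    by_cases hS : Indep cl ↑S
    · exact ⟨S, subset_rfl, hSY, hYS, hS⟩
    obtain ⟨s, hs, hsS⟩ : ∃ s ∈ S, s ∈ cl ↑(S.erase s) := by simpa [Indep] using hS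
    have hS_sub : (↑S : Set X) ⊆ cl ↑(S.erase s) := by
      intro w hw
      rcases eq_or_ne w s with rfl | hws
      · exact hsS
      · exact hP.subset_cl _ (Finset.mem_erase.2 ⟨hws, hw⟩)
    obtain ⟨B, hBS, hB⟩ := ih (S.erase s) (Finset.erase_ssubset hs)
      ((Finset.coe_subset.2 (Finset.erase_subset s S)).trans hSY)
      (hYS.trans (hP.cl_subset_cl hS_sub))
    exact ⟨B, hBS.trans (Finset.erase_subset s S), hB⟩

theorem IsPregeometry.notMem_cl_of_indep_localization (hP : IsPregeometry cl) {a : X}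
    (ha : a ∉ cl ∅) {B : Finset X} (hB : Indep (localization cl a) ↑B) : a ∉ cl ↑B := by
  classical
  induction B using Finset.induction_on with
  | empty => simpa using ha
  | insert b B hbB ih =>
    rw [Finset.coe_insert] at hB ⊢
    intro haB
    have hbB' := hP.exchange (by rwa [Set.union_singleton]) (ih (hB.subset
      (isPregeometry_localization hP a) (Set.subset_insert b _)))
    exact hB b (Set.mem_insert b _) (by rwa [localization, Set.insert_sdiff_self_of_notMem hbB])

theorem IsBasisOf.insert_of_localization (hP : IsPregeometry cl) {a : X} (ha : a ∉ cl ∅)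
    {B : Finset X} {S : Set X} (haS : a ∈ S) (hB : IsBasisOf (localization cl a) ↑B S) :
    IsBasisOf cl (insert a ↑B) S :=
  ⟨Set.insert_subset haS hB.1, by simpa only [localization, Set.union_singleton] using hB.2.1,
    (hB.2.2.anti_cl fun _ => hP.cl_mono Set.subset_union_left).insert_of_notMem_cl hP
      (hP.notMem_cl_of_indep_localization ha hB.2.2)⟩

theorem HasDim.succ_of_localization (hP : IsPregeometry cl) {a : X} (ha : a ∉ cl ∅)
    {S : Set X} (haS : a ∈ S) {q : ℕ} (hq : HasDim (localization cl a) S q) :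
    HasDim cl S (q + 1) := by
  classical
  obtain ⟨B, hB, rfl⟩ := hq
  have haB : a ∉ B := fun h => hP.notMem_cl_of_indep_localization ha hB.2.2 (hP.subset_cl _ h)
  exact ⟨insert a B, by simpa only [Finset.coe_insert] using hB.insert_of_localization hP ha haS,
    Finset.card_insert_of_notMem haB⟩

theorem HasDim.exists_localization (hP : IsPregeometry cl) {a : X} (ha : a ∉ cl ∅)
    {S : Set X} (haS : a ∈ S) {m : ℕ} (hm : HasDim cl S m) :
    ∃ q, m = q + 1 ∧ HasDim (localization cl a) S q := by
  obtain ⟨B, hB, rfl⟩ := hm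
  obtain ⟨B', -, hB'⟩ : ∃ B' ⊆ B, IsBasisOf (localization cl a) ↑B' S :=
    (isPregeometry_localization hP a).exists_isBasisOf_subset hB.1
      (hB.2.1.trans (hP.cl_mono Set.subset_union_left))
  obtain ⟨C, hC, hCcard⟩ := HasDim.succ_of_localization hP ha haS ⟨B', hB', rfl⟩
  exact ⟨B'.card, hCcard ▸ hB.card_eq hP hC, B', hB', rfl⟩

theorem isClosedSet_localization_iff (hP : IsPregeometry cl) {a : X} {S : Set X} :
    IsClosedSet (localization cl a) S ↔ a ∈ S ∧ IsClosedSet cl S := by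
  refine ⟨fun hS => ?_, fun ⟨haS, hS⟩ => (localization_eq_of_mem haS).trans hS⟩
  have haS : a ∈ S := hS ▸ hP.mem_localization_self a S
  exact ⟨haS, (localization_eq_of_mem haS).symm.trans hS⟩

theorem stmt4 {X : Type u} (cl : Set X → Set X) (hP : IsPregeometry cl) :
    IsLocallyModular cl ↔ ∀ a : X, a ∉ cl ∅ → IsModular (fun A => cl (A ∪ {a})) := by
  constructor
  · intro hLM a ha A B m n p q hA hB hm hn hp hq
    obtain ⟨haA, hA⟩ := (isClosedSet_localization_iff hP).1 hA
    obtain ⟨haB, hB⟩ := (isClosedSet_localization_iff hP).1 hB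
    have := hLM A B (m + 1) (n + 1) (p + 1) (q + 1) hA hB (hm.succ_of_localization hP ha haA)
      (hn.succ_of_localization hP ha haB) (hp.succ_of_localization hP ha (Or.inl haA))
      (hq.succ_of_localization hP ha (Set.mem_inter haA haB)) q.succ_pos
    omega
  · intro hmod A B m n p q hA hB hm hn hp hq hq_pos
    obtain ⟨C, hC, rfl⟩ := hq
    obtain ⟨a, haC⟩ := Finset.card_pos.1 hq_pos
    obtain ⟨haA, haB⟩ : a ∈ A ∩ B := hC.1 haC
    have ha : a ∉ cl ∅ := hC.2.2.notMem_cl_empty hP haC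
    obtain ⟨m', rfl, hm'⟩ := hm.exists_localization hP ha haA
    obtain ⟨n', rfl, hn'⟩ := hn.exists_localization hP ha haB
    obtain ⟨p', rfl, hp'⟩ := hp.exists_localization hP ha (Or.inl haA)
    obtain ⟨q', hq_eq, hq'⟩ :=
      HasDim.exists_localization hP ha (Set.mem_inter haA haB) ⟨C, hC, rfl⟩
    have := hmod a ha A B m' n' p' q' ((isClosedSet_localization_iff hP).2 ⟨haA, hA⟩)
      ((isClosedSet_localization_iff hP).2 ⟨haB, hB⟩) hm' hn' hp' hq'
    omega
end

section
/- Let G be a group with a homogeneous pregeometry cl and A ⊆ G finite. If a is generic over A ∪ {b} (i.e. a ∉ cl(A ∪ {b})), then a·b is also generic over A ∪ {b}, i.e. a·b ∉ cl(A ∪ {b}). -/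
universe u

theorem stmt9 {G : Type u} [Group G] (cl : Set G → Set G) (hP : IsPregeometry cl)
    (hinv : AutInvariant cl) (hhom : Homogeneous cl) (A : Finset G) (a b : G)
    (ha : a ∉ cl (↑A ∪ {b})) :
    a * b ∉ cl (↑A ∪ {b}) := by
  classical
  intro h
  obtain ⟨hsub, hmono, hidem, -, -⟩ := hP
  set F : Finset G := insert b (insert (a * b) A) with hF
  have hFcoe : (↑F : Set G) = (↑A ∪ {b}) ∪ {a * b} := by
    simp only [hF, Finset.coe_insert]
    ext x; simp; tauto
  -- cl ↑F = cl (↑A ∪ {b})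
  have hcl : cl ↑F = cl (↑A ∪ {b}) := by
    apply le_antisymm
    · rw [hFcoe]
      calc cl ((↑A ∪ {b}) ∪ {a * b}) ⊆ cl (cl (↑A ∪ {b})) := by
            apply hmono
            intro x hx
            rcases hx with hx | hx
            · exact hsub _ hx
            · simp only [Set.mem_singleton_iff] at hx; subst hx; exact h
        _ = cl (↑A ∪ {b}) := hidem _
    · rw [hFcoe]; exact hmono _ _ (Set.subset_union_left)
  have haF : a ∉ cl ↑F := by rw [hcl]; exact ha
  -- pick c generic over insert a F
  obtain ⟨c, hc⟩ : ∃ c, c ∉ cl ↑(insert a F) := by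
    exact Set.ne_univ_iff_exists_notMem _ |>.mp (hhom.1 (insert a F))
  have hcF : c ∉ cl ↑F := fun hc' =>
    hc (hmono _ _ (by simp [Finset.coe_insert]) hc')
  obtain ⟨f, hfix, hfa⟩ := hhom.2 F a c haF hcF
  have hfb : f b = b := hfix b (by simp [hF])
  have hfab : f (a * b) = a * b := hfix (a * b) (by simp [hF])
  have : c * b = a * b := by rw [← hfab, map_mul, hfa, hfb]
  have hca : c = a := mul_right_cancel this
  exact hc (hca ▸ hsub _ (by simp [Finset.coe_insert]))
end

section
/- A homogeneous pregeometry on a group G is not trivial: there exist a, b ∈ G with a·b ∈ cl({a,b}) but a·b ∉ cl({a}) ∪ cl({b}). -/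
universe u

theorem stmt10 {G : Type u} [Group G] (cl : Set G → Set G) (hP : IsPregeometry cl)
    (hinv : AutInvariant cl) (hhom : Homogeneous cl) :
    ∃ a b : G, a * b ∈ cl {a, b} ∧ a * b ∉ cl {a} ∪ cl {b} := by
  classical
  obtain ⟨hsub, hmono, hidem, -, hexch⟩ := hP
  obtain ⟨hdim, hh⟩ := hhom
  -- key lemma: the subgroup generated by a finite set is contained in its closure
  have key : ∀ (A : Finset G) (g : G), g ∈ Subgroup.closure (↑A : Set G) → g ∈ cl ↑A := by
    intro A g hg
    by_contra hgc
    have hne := hdim (insert g A)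
    have : ∃ c, c ∉ cl ↑(insert g A) := by
      by_contra h
      push_neg at h
      exact hne (Set.eq_univ_of_forall h)
    obtain ⟨c, hc⟩ := this
    have hcA : c ∉ cl ↑A := fun h =>
      hc (hmono _ _ (by simp only [Finset.coe_insert]; exact Set.subset_insert _ _) h)
    obtain ⟨f, hfA, hfg⟩ := hh A g c hgc hcA
    have hfix : Subgroup.closure (↑A : Set G) ≤
        MonoidHom.eqLocus (f : G →* G) (MonoidHom.id G) :=
      (Subgroup.closure_le _).mpr fun a ha => hfA a ha
    have hfgg : f g = g := hfix hg
    have : g = c := by rw [← hfg, hfgg]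
    subst this
    exact hc (hsub _ (by simp))
  -- pick a ∉ cl ∅
  have hne0 := hdim (∅ : Finset G)
  have : ∃ a : G, a ∉ cl ∅ := by
    by_contra h
    push_neg at h
    exact hne0 (by simpa using Set.eq_univ_of_forall h)
  obtain ⟨a, ha⟩ := this
  -- pick b ∉ cl {a}
  have hnea := hdim ({a} : Finset G)
  have : ∃ b : G, b ∉ cl {a} := by
    by_contra h
    push_neg at h
    exact hnea (by simpa using Set.eq_univ_of_forall h)
  obtain ⟨b, hb⟩ := this
  have hb0 : b ∉ cl ∅ := fun h => hb (hmono ∅ {a} (Set.empty_subset _) h)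
  -- a ∉ cl {b} by exchange
  have hab : a ∉ cl {b} := by
    intro h
    have := hexch ∅ a b (by simpa using h) ha
    exact hb (by simpa using this)
  refine ⟨a, b, ?_, ?_⟩
  · -- a * b ∈ cl {a, b}
    have := key ({a, b} : Finset G) (a * b)
      (mul_mem (Subgroup.subset_closure (by simp)) (Subgroup.subset_closure (by simp)))
    simpa using this
  · -- a * b ∉ cl {a} ∪ cl {b}
    rintro (h | h)
    · -- then b ∈ cl {a}
      have h1 : b ∈ Subgroup.closure ({a, a * b} : Set G) := by
        have : a⁻¹ * (a * b) ∈ Subgroup.closure ({a, a * b} : Set G) :=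
          mul_mem (inv_mem (Subgroup.subset_closure (by simp)))
            (Subgroup.subset_closure (by simp))
        simpa using this
      have h2 : b ∈ cl {a, a * b} := by
        have := key ({a, a * b} : Finset G) b (by simpa using h1)
        simpa using this
      have h3 : ({a, a * b} : Set G) ⊆ cl {a} := by
        rintro x (h' | h')
        · rw [h']; exact hsub {a} rfl
        · rw [h']; exact h
      have : b ∈ cl {a} := by
        have := hmono _ _ h3 h2
        rw [hidem] at this
        exact this
      exact hb this
    · -- then a ∈ cl {b}
      have h1 : a ∈ Subgroup.closure ({b, a * b} : Set G) := by
        have : (a * b) * b⁻¹ ∈ Subgroup.closure ({b, a * b} : Set G) :=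
          mul_mem (Subgroup.subset_closure (by simp))
            (inv_mem (Subgroup.subset_closure (by simp)))
        simpa using this
      have h2 : a ∈ cl {b, a * b} := by
        have := key ({b, a * b} : Finset G) a (by simpa using h1)
        simpa using this
      have h3 : ({b, a * b} : Set G) ⊆ cl {b} := by
        rintro x (h' | h')
        · rw [h']; exact hsub {b} rfl
        · rw [h']; exact h
      have : a ∈ cl {b} := by
        have := hmono _ _ h3 h2
        rw [hidem] at this
        exact this
      exact hab this
end

section
/- Let G be a group with homogeneous pregeometry cl, A ⊆ G finite, and H ≤ G a subgroup invariant under all automorphisms of G fixing A pointwise. If H contains an element generic over A (i.e. some h ∈ H with h ∉ cl(A)), then H = G. -/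
universe u

theorem stmt11 {G : Type u} [Group G] (cl : Set G → Set G) (hP : IsPregeometry cl)
    (hinv : AutInvariant cl) (hhom : Homogeneous cl) (A : Finset G) (H : Subgroup G)
    (hHinv : ∀ f : G ≃* G, (∀ x ∈ A, f x = x) → (⇑f) '' (H : Set G) = (H : Set G))
    (hgen : ∃ h ∈ H, h ∉ cl ↑A) :
    H = ⊤ := by
  classical
  obtain ⟨hsub, hmono, hidem, -, -⟩ := hP
  obtain ⟨hinf, hmov⟩ := hhom
  obtain ⟨h, hhH, hhcl⟩ := hgen
  -- every element not in cl A is in H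
  have genH : ∀ b, b ∉ cl ↑A → b ∈ H := by
    intro b hb
    obtain ⟨f, hfA, hfh⟩ := hmov A h b hhcl hb
    have : b ∈ (⇑f) '' (H : Set G) := ⟨h, hhH, hfh⟩
    rwa [hHinv f hfA] at this
  -- key: for any g there is b generic with g*b generic
  have key : ∀ g : G, ∃ b, b ∉ cl ↑A ∧ g * b ∉ cl ↑A := by
    intro g
    by_contra hbad
    push_neg at hbad
    obtain ⟨b₁, hb₁⟩ : ∃ b₁, b₁ ∉ cl ↑A := by
      have := hinf A
      rcases Set.ne_univ_iff_exists_notMem _ |>.mp this with ⟨x, hx⟩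
      exact ⟨x, hx⟩
    have hd₁ : g * b₁ ∈ cl ↑A := hbad b₁ hb₁
    set d₁ := g * b₁ with hd₁def
    set A₁ : Finset G := A ∪ {b₁, d₁} with hA₁
    obtain ⟨b₂, hb₂⟩ : ∃ b₂, b₂ ∉ cl ↑A₁ := by
      rcases Set.ne_univ_iff_exists_notMem _ |>.mp (hinf A₁) with ⟨x, hx⟩
      exact ⟨x, hx⟩
    have hAsubA₁ : (↑A : Set G) ⊆ ↑A₁ := by
      intro x hx
      have : x ∈ A₁ := Finset.mem_union_left _ hx
      exact this
    have hb₂A : b₂ ∉ cl ↑A := fun hc => hb₂ (hmono _ _ hAsubA₁ hc)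
    have hd₂ : g * b₂ ∈ cl ↑A := hbad b₂ hb₂A
    set d₂ := g * b₂ with hd₂def
    set B : Finset G := A ∪ {b₁, d₁, d₂} with hB
    -- cl ↑B ⊆ cl ↑A₁
    have hBsub : (↑B : Set G) ⊆ cl ↑A₁ := by
      intro x hx
      have hx' : x ∈ B := hx
      rw [hB] at hx'
      rcases Finset.mem_union.mp hx' with hx' | hx'
      · exact hsub _ (hAsubA₁ hx')
      · rcases Finset.mem_insert.mp hx' with hx' | hx'
        · subst hx'; apply hsub; simp [hA₁]
        · rcases Finset.mem_insert.mp hx' with hx' | hx'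
          · subst hx'; apply hsub; simp [hA₁]
          · rw [Finset.mem_singleton.mp hx']
            exact hmono _ _ hAsubA₁ hd₂
    have hclB : cl ↑B ⊆ cl ↑A₁ := by
      have := hmono _ _ hBsub
      rwa [hidem] at this
    have hb₂B : b₂ ∉ cl ↑B := fun hc => hb₂ (hclB hc)
    set C : Finset G := insert b₂ B with hC
    obtain ⟨c, hc⟩ : ∃ c, c ∉ cl ↑C := by
      rcases Set.ne_univ_iff_exists_notMem _ |>.mp (hinf C) with ⟨x, hx⟩
      exact ⟨x, hx⟩
    have hBC : (↑B : Set G) ⊆ ↑C := by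
      intro x hx
      have : x ∈ C := by rw [hC]; exact Finset.mem_insert_of_mem hx
      exact this
    have hcB : c ∉ cl ↑B := fun hc' => hc (hmono _ _ hBC hc')
    obtain ⟨f, hfB, hfb₂⟩ := hmov B b₂ c hb₂B hcB
    have hfb₁ : f b₁ = b₁ := hfB b₁ (by simp [hB])
    have hfd₁ : f d₁ = d₁ := hfB d₁ (by simp [hB])
    have hfd₂ : f d₂ = d₂ := hfB d₂ (by simp [hB])
    have hfg : f g = g := by
      have : g = d₁ * b₁⁻¹ := by rw [hd₁def]; group
      rw [this, map_mul, map_inv, hfd₁, hfb₁]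
    have : d₂ = g * c := by
      conv_lhs => rw [← hfd₂, hd₂def, map_mul, hfg, hfb₂]
    have hbc : b₂ = c := by
      have := this
      rw [hd₂def] at this
      exact mul_left_cancel this
    apply hc
    rw [← hbc]
    exact hsub _ (by simp [hC])
  -- conclude
  rw [eq_top_iff]
  intro g _
  obtain ⟨b, hb, hgb⟩ := key g
  have h1 : g * b ∈ H := genH _ hgb
  have h2 : b ∈ H := genH _ hb
  have : g = (g * b) * b⁻¹ := by group
  rw [this]
  exact H.mul_mem h1 (H.inv_mem h2)
end

section
/- Let G be a group with a homogeneous pregeometry. If there exists a pair a, b ∈ G with dim({a,b}) = 2 and a·b = b·a, then G is commutative. -/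
universe u

lemma keyK {G : Type u} [Group G] (cl : Set G → Set G) (hP : IsPregeometry cl)
    (hhom : Homogeneous cl) (A : Finset G) (g : G) :
    ∃ h : G, h ∉ cl ↑A ∧ g * h ∉ cl ↑A := by
  classical
  obtain ⟨hsub, hmono, hidem, -, -⟩ := hP
  by_contra hcon
  push_neg at hcon
  obtain ⟨h1, hh1⟩ := Set.ne_univ_iff_exists_notMem _ |>.mp (hhom.1 (insert g A))
  obtain ⟨h2, hh2⟩ := Set.ne_univ_iff_exists_notMem _ |>.mp
    (hhom.1 (insert h1 (insert g A)))
  have hsub1 : (↑A : Set G) ⊆ ↑(insert g A) := by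
    intro x hx; simp only [Finset.coe_insert, Set.mem_insert_iff]; exact Or.inr hx
  have hsub2 : (↑(insert g A) : Set G) ⊆ ↑(insert h1 (insert g A)) := by
    intro x hx; simp only [Finset.coe_insert, Set.mem_insert_iff] at hx ⊢; tauto
  have hh1A : h1 ∉ cl ↑A := fun hm => hh1 (hmono _ _ hsub1 hm)
  have hh2A : h2 ∉ cl ↑A := fun hm => hh2 (hmono _ _ (hsub2.trans' hsub1) hm)
  have hg1 : g * h1 ∈ cl ↑A := hcon h1 hh1A
  have hg2 : g * h2 ∈ cl ↑A := hcon h2 hh2A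
  set A' : Finset G := insert (g * h1) (insert g A) with hA'
  have hclA' : cl ↑A' = cl ↑(insert g A) := by
    apply subset_antisymm
    · have hs : (↑A' : Set G) ⊆ cl ↑(insert g A) := by
        intro x hx
        simp only [hA', Finset.coe_insert, Set.mem_insert_iff] at hx
        rcases hx with rfl | hx
        · exact hmono _ _ hsub1 hg1
        · exact hsub _ (by simp only [Finset.coe_insert, Set.mem_insert_iff]; tauto)
      calc cl ↑A' ⊆ cl (cl ↑(insert g A)) := hmono _ _ hs
        _ = cl ↑(insert g A) := hidem _
    · apply hmono
      intro x hx
      simp only [hA', Finset.coe_insert, Set.mem_insert_iff] at hx ⊢; tauto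
  have hh1A' : h1 ∉ cl ↑A' := by rw [hclA']; exact hh1
  have hh2A' : h2 ∉ cl ↑A' := by
    rw [hclA']; exact fun hm => hh2 (hmono _ _ hsub2 hm)
  obtain ⟨f, hfix, hf12⟩ := hhom.2 A' h1 h2 hh1A' hh2A'
  have hfg : f g = g := hfix g (by simp [hA'])
  have hfgh1 : f (g * h1) = g * h1 := hfix (g * h1) (by simp [hA'])
  have : g * h1 = g * h2 := by
    rw [← hfgh1, map_mul, hfg, hf12]
  have h12 : h1 = h2 := mul_left_cancel this
  exact hh2 (h12 ▸ hsub _ (by simp))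

theorem stmt12 {G : Type u} [Group G] (cl : Set G → Set G) (hP : IsPregeometry cl)
    (hinv : AutInvariant cl) (hhom : Homogeneous cl) (a b : G)
    (hdim : HasDim cl {a, b} 2) (hcomm : a * b = b * a) :
    ∀ x y : G, x * y = y * x := by
  classical
  obtain ⟨hsub, hmono, hidem, hfin, hexch⟩ := hP
  obtain ⟨B, ⟨hBsub, hBspan, hBind⟩, hBcard⟩ := hdim
  -- a ≠ b
  have hne : a ≠ b := by
    intro h
    subst h
    have : B ⊆ ({a} : Finset G) := by
      intro x hx
      have := hBsub (Finset.mem_coe.mpr hx)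
      simp only [Set.mem_insert_iff, Set.mem_singleton_iff] at this
      simp [this.elim id id]
    have := Finset.card_le_card this
    simp [hBcard] at this
  -- B = {a, b}
  have hBeq : B = ({a, b} : Finset G) := by
    apply Finset.eq_of_subset_of_card_le
    · intro x hx
      have := hBsub (Finset.mem_coe.mpr hx)
      simp only [Set.mem_insert_iff, Set.mem_singleton_iff] at this
      simp [this]
    · rw [hBcard, Finset.card_insert_of_notMem (by simp [hne]), Finset.card_singleton]
  have hBcoe : (↑B : Set G) = {a, b} := by rw [hBeq]; simp
  have hba : b ∉ cl {a} := by
    have := hBind b (by rw [hBcoe]; simp)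
    have hd : (↑B : Set G) \ {b} = {a} := by
      rw [hBcoe]
      ext x
      simp only [Set.mem_diff, Set.mem_insert_iff, Set.mem_singleton_iff]
      constructor
      · rintro ⟨h1 | h1, h2⟩ <;> tauto
      · rintro rfl; exact ⟨Or.inl rfl, hne⟩
    rwa [hd] at this
  have hab : a ∉ cl {b} := by
    have := hBind a (by rw [hBcoe]; simp)
    have hd : (↑B : Set G) \ {a} = {b} := by
      rw [hBcoe]
      ext x
      simp only [Set.mem_diff, Set.mem_insert_iff, Set.mem_singleton_iff]
      constructor
      · rintro ⟨h1 | h1, h2⟩ <;> tauto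
      · rintro rfl; exact ⟨Or.inr rfl, fun h => hne h.symm⟩
    rwa [hd] at this
  have ha0 : a ∉ cl ∅ := fun h => hab (hmono ∅ {b} (Set.empty_subset _) h)
  -- a commutes with everything outside cl {a}
  have hC : ∀ c, c ∉ cl {a} → a * c = c * a := by
    intro c hc
    obtain ⟨f, hfix, hfb⟩ := hhom.2 {a} b c (by simpa using hba) (by simpa using hc)
    have hfa : f a = a := hfix a (Finset.mem_singleton_self a)
    have := congrArg f hcomm
    simpa only [map_mul, hfa, hfb] using this
  -- a is central
  have hacen : ∀ g : G, a * g = g * a := by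
    intro g
    obtain ⟨h, hh, hgh⟩ := keyK cl ⟨hsub, hmono, hidem, hfin, hexch⟩ hhom {a} g
    have h1 := hC h (by simpa using hh)
    have h2 := hC (g * h) (by simpa using hgh)
    have : a * g * h = g * a * h := by
      calc a * g * h = a * (g * h) := by rw [mul_assoc]
        _ = (g * h) * a := h2
        _ = g * (h * a) := by rw [mul_assoc]
        _ = g * (a * h) := by rw [h1]
        _ = g * a * h := by rw [mul_assoc]
    exact mul_right_cancel this
  -- every element outside cl ∅ is central
  have hcen : ∀ c, c ∉ cl ∅ → ∀ g : G, c * g = g * c := by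
    intro c hc g
    obtain ⟨f, -, hfa⟩ := hhom.2 ∅ a c (by simpa using ha0) (by simpa using hc)
    calc c * g = f a * f (f.symm g) := by rw [hfa, MulEquiv.apply_symm_apply]
      _ = f (a * f.symm g) := (map_mul f _ _).symm
      _ = f (f.symm g * a) := by rw [hacen]
      _ = f (f.symm g) * f a := map_mul f _ _
      _ = g * c := by rw [hfa, MulEquiv.apply_symm_apply]
  -- every element is central
  intro x y
  obtain ⟨h, hh, hxh⟩ := keyK cl ⟨hsub, hmono, hidem, hfin, hexch⟩ hhom ∅ x
  have hc1 := hcen h (by simpa using hh)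
  have hc2 := hcen (x * h) (by simpa using hxh)
  have hinvc : h⁻¹ * y = y * h⁻¹ := by
    have h' := hc1 y
    calc h⁻¹ * y = h⁻¹ * (y * h) * h⁻¹ := by group
      _ = h⁻¹ * (h * y) * h⁻¹ := by rw [← h']
      _ = y * h⁻¹ := by group
  calc x * y = (x * h) * (h⁻¹ * y) := by group
    _ = (x * h) * (y * h⁻¹) := by rw [hinvc]
    _ = ((x * h) * y) * h⁻¹ := by group
    _ = (y * (x * h)) * h⁻¹ := by rw [hc2]
    _ = y * x := by group
end

section
/- Let G be a group with a homogeneous pregeometry, A ⊆ G finite, and (a, b) a generic pair over A (i.e. dim({a,b}/A) = 2). If b·a ∈ cl(A ∪ {a·b}), then G is commutative. -/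
universe u

section Helpers

variable {G : Type u} [Group G] {cl : Set G → Set G}

lemma cl_mono (hP : IsPregeometry cl) {S T : Set G} (h : S ⊆ T) : cl S ⊆ cl T :=
  hP.2.1 S T h

lemma cl_trans (hP : IsPregeometry cl) {S T : Set G} (h : S ⊆ cl T) : cl S ⊆ cl T := by
  have h2 : cl S ⊆ cl (cl T) := hP.2.1 _ _ h
  rwa [hP.2.2.1 T] at h2

lemma exists_notin (hhom : Homogeneous cl) (B : Finset G) : ∃ x, x ∉ cl ↑B := by
  by_contra h
  push_neg at h
  exact hhom.1 B (Set.eq_univ_of_forall h)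

lemma fix_image (f : G ≃* G) (A : Finset G) (hf : ∀ a ∈ A, f a = a) :
    ⇑f '' ↑A = ↑A := by
  rw [Set.image_congr (fun a ha => hf a (Finset.mem_coe.mp ha)), Set.image_id']

lemma move_cl (hinv : AutInvariant cl) (f : G ≃* G) (A : Finset G)
    (hf : ∀ a ∈ A, f a = a) (x : G) :
    ⇑f '' cl (↑A ∪ {x}) = cl (↑A ∪ {f x}) := by
  rw [hinv f, Set.image_union, fix_image f A hf, Set.image_singleton]

lemma mem_move (hinv : AutInvariant cl) (f : G ≃* G) (A : Finset G)
    (hf : ∀ a ∈ A, f a = a) {x y : G} (hy : y ∈ cl (↑A ∪ {x})) :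
    f y ∈ cl (↑A ∪ {f x}) := by
  rw [← move_cl hinv f A hf x]; exact ⟨y, hy, rfl⟩

lemma notMem_move (hinv : AutInvariant cl) (f : G ≃* G) (A : Finset G)
    (hf : ∀ a ∈ A, f a = a) {x y : G} (hy : y ∉ cl (↑A ∪ {x})) :
    f y ∉ cl (↑A ∪ {f x}) := by
  rw [← move_cl hinv f A hf x]
  rintro ⟨z, hz, hze⟩
  exact hy (f.injective hze ▸ hz)

lemma mul_cl (hP : IsPregeometry cl) (hhom : Homogeneous cl) (A : Finset G) (u v : G) :
    u * v ∈ cl (↑A ∪ {u, v}) := by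
  classical
  by_contra h
  have hBc : (↑(insert u (insert v A)) : Set G) = ↑A ∪ {u, v} := by
    ext x; simp; try tauto
  rw [← hBc] at h
  obtain ⟨w, hw⟩ := exists_notin hhom (insert (u*v) (insert u (insert v A)))
  have hw1 : w ∉ cl ↑(insert u (insert v A)) := fun hx =>
    hw (cl_mono hP (by intro z hz; simp at hz ⊢; tauto) hx)
  have hne : w ≠ u * v := fun he => hw (he ▸ hP.1 _ (by simp))
  obtain ⟨f, hfix, hfb⟩ := (hhom.2 (insert u (insert v A)) (u*v) w h hw1)
  have hfu : f u = u := hfix u (by simp)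
  have hfv : f v = v := hfix v (by simp)
  rw [map_mul, hfu, hfv] at hfb
  exact hne hfb.symm

lemma inv_cl (hP : IsPregeometry cl) (hhom : Homogeneous cl) (A : Finset G) (u : G) :
    u⁻¹ ∈ cl (↑A ∪ {u}) := by
  classical
  by_contra h
  have hBc : (↑(insert u A) : Set G) = ↑A ∪ {u} := by
    ext x; simp; try tauto
  rw [← hBc] at h
  obtain ⟨w, hw⟩ := exists_notin hhom (insert u⁻¹ (insert u A))
  have hw1 : w ∉ cl ↑(insert u A) := fun hx =>
    hw (cl_mono hP (by intro z hz; simp at hz ⊢; tauto) hx)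
  have hne : w ≠ u⁻¹ := fun he => hw (he ▸ hP.1 _ (by simp))
  obtain ⟨f, hfix, hfb⟩ := (hhom.2 (insert u A) u⁻¹ w h hw1)
  have hfu : f u = u := hfix u (by simp)
  rw [map_inv, hfu] at hfb
  exact hne hfb.symm

lemma mul_mem_cl (hP : IsPregeometry cl) (hhom : Homogeneous cl) (A : Finset G)
    {S : Set G} {x y : G} (hx : x ∈ cl (↑A ∪ S)) (hy : y ∈ cl (↑A ∪ S)) :
    x * y ∈ cl (↑A ∪ S) := by
  refine cl_trans hP ?_ (mul_cl hP hhom A x y)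
  intro z hz
  simp only [Set.mem_union, Set.mem_insert_iff, Set.mem_singleton_iff] at hz
  rcases hz with hz | rfl | rfl
  · exact hP.1 _ (Set.mem_union_left _ hz)
  · exact hx
  · exact hy

lemma inv_mem_cl (hP : IsPregeometry cl) (hhom : Homogeneous cl) (A : Finset G)
    {S : Set G} {x : G} (hx : x ∈ cl (↑A ∪ S)) : x⁻¹ ∈ cl (↑A ∪ S) := by
  refine cl_trans hP ?_ (inv_cl hP hhom A x)
  intro z hz
  simp only [Set.mem_union, Set.mem_singleton_iff] at hz
  rcases hz with hz | rfl
  · exact hP.1 _ (Set.mem_union_left _ hz)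
  · exact hx

end Helpers

theorem stmt13 {G : Type u} [Group G] (cl : Set G → Set G) (hP : IsPregeometry cl)
    (hinv : AutInvariant cl) (hhom : Homogeneous cl) (A : Finset G) (a b : G)
    (hgen : HasDim (fun S => cl (S ∪ ↑A)) {a, b} 2)
    (hba : b * a ∈ cl (↑A ∪ {a * b})) :
    ∀ x y : G, x * y = y * x := by
  classical
  -- Extract independence from hgen
  obtain ⟨B, ⟨hBsub, -, hBind⟩, hBcard⟩ := hgen
  have hab_ne : a ≠ b := by
    rintro rfl
    have hsub : B ⊆ ({a} : Finset G) := by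
      rw [← Finset.coe_subset, Finset.coe_singleton]
      simpa using hBsub
    have := Finset.card_le_card hsub
    simp [hBcard] at this
  have hBeq : (↑B : Set G) = {a, b} := by
    have hsub : B ⊆ ({a, b} : Finset G) := by
      rw [← Finset.coe_subset]
      simpa using hBsub
    have hcard : ({a, b} : Finset G).card ≤ B.card := by
      rw [hBcard, Finset.card_insert_of_notMem (by simp [hab_ne]), Finset.card_singleton]
    rw [Finset.eq_of_subset_of_card_le hsub hcard]
    simp
  have hb : b ∉ cl (↑A ∪ {a}) := by
    have h := hBind b (by rw [hBeq]; simp)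
    rw [hBeq] at h
    have hset : ({a, b} : Set G) \ {b} = {a} := by
      ext x
      simp only [Set.mem_diff, Set.mem_insert_iff, Set.mem_singleton_iff]
      constructor
      · rintro ⟨h1 | h1, h2⟩
        · exact h1
        · exact absurd h1 h2
      · rintro rfl; exact ⟨Or.inl rfl, hab_ne⟩
    rw [hset] at h
    rw [Set.union_comm]
    exact h
  have ha : a ∉ cl (↑A ∪ {b}) := by
    have h := hBind a (by rw [hBeq]; simp)
    rw [hBeq] at h
    have hset : ({a, b} : Set G) \ {a} = {b} := by
      ext x
      simp only [Set.mem_diff, Set.mem_insert_iff, Set.mem_singleton_iff]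
      constructor
      · rintro ⟨h1 | h1, h2⟩
        · exact absurd h1 h2
        · exact h1
      · rintro rfl; exact ⟨Or.inr rfl, fun he => hab_ne he.symm⟩
    rw [hset] at h
    rw [Set.union_comm]
    exact h
  have hbA : b ∉ cl ↑A := fun h => hb (cl_mono hP Set.subset_union_left h)
  have haA : a ∉ cl ↑A := fun h => ha (cl_mono hP Set.subset_union_left h)
  -- a*b is generic and b is generic over a*b
  have habA : a * b ∉ cl ↑A := by
    intro h
    apply hb
    have hai : a⁻¹ ∈ cl (↑A ∪ {a}) := inv_mem_cl hP hhom A (hP.1 _ (by simp))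
    have hab' : a * b ∈ cl (↑A ∪ {a}) := cl_mono hP Set.subset_union_left h
    have := mul_mem_cl hP hhom A hai hab'
    simpa using this
  have hbab : b ∉ cl (↑A ∪ {a * b}) := by
    intro h
    have h2 : a * b ∈ cl (↑A ∪ {b}) := hP.2.2.2.2 ↑A b (a*b) h hbA
    apply ha
    have hbi : b⁻¹ ∈ cl (↑A ∪ {b}) := inv_mem_cl hP hhom A (hP.1 _ (by simp))
    have := mul_mem_cl hP hhom A h2 hbi
    simpa using this
  -- h1: every generic c admits a generic-over-c conjugator into cl(A ∪ {c})
  have h1 : ∀ c, c ∉ cl ↑A → ∃ g, g ∉ cl (↑A ∪ {c}) ∧ g * c * g⁻¹ ∈ cl (↑A ∪ {c}) := by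
    intro c hc
    obtain ⟨f, hfix, hfab⟩ := hhom.2 A (a*b) c habA hc
    refine ⟨f b, ?_, ?_⟩
    · have := notMem_move hinv f A hfix hbab
      rwa [hfab] at this
    · have key : f b * c * (f b)⁻¹ = f (b * a) := by
        rw [← hfab, ← map_inv, ← map_mul, ← map_mul]
        congr 1
        group
      rw [key]
      have := mem_move hinv f A hfix hba
      rwa [hfab] at this
  -- h2: the conjugate is constant among generic conjugators
  have h2 : ∀ c, c ∉ cl ↑A → ∃ d, d ∈ cl (↑A ∪ {c}) ∧
      ∀ g, g ∉ cl (↑A ∪ {c}) → g * c * g⁻¹ = d := by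
    intro c hc
    obtain ⟨g₀, hg₀, hd⟩ := h1 c hc
    refine ⟨g₀ * c * g₀⁻¹, hd, ?_⟩
    intro g hg
    have hBcl : cl (↑(insert c (insert (g₀* c * g₀⁻¹) A)) : Set G) = cl (↑A ∪ {c}) := by
      apply Set.Subset.antisymm
      · apply cl_trans hP
        intro x hx
        simp only [Finset.coe_insert, Set.mem_insert_iff, Finset.mem_coe] at hx
        rcases hx with rfl | rfl | hx
        · exact hP.1 _ (by simp)
        · exact hd
        · exact hP.1 _ (Set.mem_union_left _ hx)
      · apply cl_mono hP
        intro x hx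
        simp only [Set.mem_union, Set.mem_singleton_iff] at hx
        rcases hx with hx | rfl
        · simp [hx]
        · simp
    obtain ⟨f, hfix, hfg⟩ := hhom.2 (insert c (insert (g₀* c * g₀⁻¹) A)) g₀ g
      (by rw [hBcl]; exact hg₀) (by rw [hBcl]; exact hg)
    have hc' : f c = c := hfix c (by simp)
    have hd' : f (g₀ * c * g₀⁻¹) = g₀ * c * g₀⁻¹ := hfix _ (by simp)
    calc g * c * g⁻¹ = f g₀ * f c * (f g₀)⁻¹ := by rw [hfg, hc']
    _ = f (g₀ * c * g₀⁻¹) := by rw [← map_inv, ← map_mul, ← map_mul]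
    _ = g₀ * c * g₀⁻¹ := hd'
  -- Main: produce d generic, centralized by all elements generic over d
  have main : ∃ d, d ∉ cl ↑A ∧ ∀ h, h ∉ cl (↑A ∪ {d}) → h * d * h⁻¹ = d := by
    obtain ⟨d, hdmem, hdconst⟩ := h2 (a*b) habA
    set c := a * b with hc_def
    -- h3: d is centralized by everything generic over c
    have h3 : ∀ g, g ∉ cl (↑A ∪ {c}) → g * d * g⁻¹ = d := by
      intro g hg
      obtain ⟨g', hg'⟩ := exists_notin hhom (insert g (insert c A))
      have hg'set : g' ∉ cl (↑A ∪ {c, g}) := by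
        rw [show (↑A ∪ {c, g} : Set G) = ↑(insert g (insert c A)) from by ext x; simp; try tauto]
        exact hg'
      have hg'c : g' ∉ cl (↑A ∪ {c}) := fun h =>
        hg'set (cl_mono hP (Set.union_subset_union_right _ (by simp)) h)
      have e1 : g' * c * g'⁻¹ = d := hdconst g' hg'c
      have hgg' : g * g' ∉ cl (↑A ∪ {c}) := by
        intro h
        apply hg'set
        have hgmem : g ∈ cl (↑A ∪ {c, g}) := hP.1 _ (by simp)
        have hmul : g * g' ∈ cl (↑A ∪ {c, g}) :=
          cl_mono hP (Set.union_subset_union_right _ (by simp)) h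
        have := mul_mem_cl hP hhom A (inv_mem_cl hP hhom A hgmem) hmul
        simpa using this
      have e2 : (g * g') * c * (g * g')⁻¹ = d := hdconst _ hgg'
      have key : g * d * g⁻¹ = (g * g') * c * (g * g')⁻¹ := by rw [← e1]; group
      rw [key, e2]
    -- d is generic
    have h4 : d ∉ cl ↑A := by
      intro hdA
      obtain ⟨g, hg⟩ := exists_notin hhom (insert c A)
      have hgc : g ∉ cl (↑A ∪ {c}) := by
        rw [show (↑A ∪ {c} : Set G) = ↑(insert c A) from by ext x; simp; try tauto]
        exact hg
      have e := hdconst g hgc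
      have hgmem : g ∈ cl (↑A ∪ {g}) := hP.1 _ (by simp)
      have hdmem' : d ∈ cl (↑A ∪ {g}) := cl_mono hP Set.subset_union_left hdA
      have hcmem : c ∈ cl (↑A ∪ {g}) := by
        have : c = g⁻¹ * d * g := by rw [← e]; group
        rw [this]
        exact mul_mem_cl hP hhom A
          (mul_mem_cl hP hhom A (inv_mem_cl hP hhom A hgmem) hdmem') hgmem
      exact hgc (hP.2.2.2.2 ↑A c g hcmem habA)
    -- d is centralized by everything generic over d
    refine ⟨d, h4, ?_⟩
    obtain ⟨e, hemem, heconst⟩ := h2 d h4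
    obtain ⟨h₀, hh₀⟩ := exists_notin hhom (insert c (insert d A))
    have h₀cd : h₀ ∉ cl (↑A ∪ {c, d}) := by
      rw [show (↑A ∪ {c, d} : Set G) = ↑(insert c (insert d A)) from by ext x; simp; try tauto]
      exact hh₀
    have h₀c : h₀ ∉ cl (↑A ∪ {c}) := fun h =>
      h₀cd (cl_mono hP (Set.union_subset_union_right _ (by simp)) h)
    have h₀d : h₀ ∉ cl (↑A ∪ {d}) := fun h =>
      h₀cd (cl_mono hP (Set.union_subset_union_right _ (by simp)) h)
    have hed : e = d := by rw [← heconst h₀ h₀d, h3 h₀ h₀c]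
    intro h hh
    rw [heconst h hh, hed]
  -- Transfer by homogeneity: every generic is centralized by everything generic over it
  have hQ : ∀ c, c ∉ cl ↑A → ∀ h, h ∉ cl (↑A ∪ {c}) → h * c * h⁻¹ = c := by
    obtain ⟨d, hdA, hdQ⟩ := main
    intro c hc h hh
    obtain ⟨f, hfix, hfd⟩ := hhom.2 A d c hdA hc
    have hf'h : f.symm h ∉ cl (↑A ∪ {d}) := by
      intro hmem
      have := mem_move hinv f A hfix hmem
      rw [f.apply_symm_apply, hfd] at this
      exact hh this
    have := congrArg f (hdQ _ hf'h)
    rw [map_mul, map_mul, map_inv, f.apply_symm_apply, hfd] at this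
    exact this
  -- all generics commute
  have h7 : ∀ u w, u ∉ cl ↑A → w ∉ cl ↑A → u * w = w * u := by
    intro u w hu hw
    by_cases hcase : w ∈ cl (↑A ∪ {u})
    · obtain ⟨h, hhmem⟩ := exists_notin hhom (insert u (insert w A))
      have hhuw : h ∉ cl (↑A ∪ {u, w}) := by
        rw [show (↑A ∪ {u, w} : Set G) = ↑(insert u (insert w A)) from by ext x; simp; try tauto]
        exact hhmem
      have hhu : h ∉ cl (↑A ∪ {u}) := fun hx =>
        hhuw (cl_mono hP (Set.union_subset_union_right _ (by simp)) hx)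
      have hhw : h ∉ cl (↑A ∪ {w}) := fun hx =>
        hhuw (cl_mono hP (Set.union_subset_union_right _ (by simp)) hx)
      have e1 : h * u * h⁻¹ = u := hQ u hu h hhu
      have hwh : w * h ∉ cl (↑A ∪ {u}) := by
        intro hmem
        apply hhuw
        have hwmem : w ∈ cl (↑A ∪ {u, w}) := hP.1 _ (by simp)
        have hmul : w * h ∈ cl (↑A ∪ {u, w}) :=
          cl_mono hP (Set.union_subset_union_right _ (by simp)) hmem
        have := mul_mem_cl hP hhom A (inv_mem_cl hP hhom A hwmem) hmul
        simpa using this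
      have e3 : (w * h) * u * (w * h)⁻¹ = u := hQ u hu _ hwh
      have e1' : h * u = u * h := mul_inv_eq_iff_eq_mul.mp e1
      have e3' : w * h * u = u * (w * h) := mul_inv_eq_iff_eq_mul.mp e3
      have : w * u * h = u * w * h := by
        calc w * u * h = w * (u * h) := by group
        _ = w * (h * u) := by rw [← e1']
        _ = w * h * u := by group
        _ = u * (w * h) := e3'
        _ = u * w * h := by group
      exact (mul_right_cancel this).symm
    · have e := hQ u hu w hcase
      exact (mul_inv_eq_iff_eq_mul.mp e).symm
  -- every element is a product of two generics
  have h8 : ∀ x : G, ∃ p q : G, p ∉ cl ↑A ∧ q ∉ cl ↑A ∧ x = p * q := by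
    intro x
    obtain ⟨g, hg⟩ := exists_notin hhom (insert x A)
    have hgx : g ∉ cl (↑A ∪ {x}) := by
      rw [show (↑A ∪ {x} : Set G) = ↑(insert x A) from by ext z; simp; try tauto]
      exact hg
    have hgA : g ∉ cl ↑A := fun h => hgx (cl_mono hP Set.subset_union_left h)
    refine ⟨x * g, g⁻¹, ?_, ?_, by group⟩
    · intro hmem
      apply hgx
      have hx : x ∈ cl (↑A ∪ {x}) := hP.1 _ (by simp)
      have h1' : x * g ∈ cl (↑A ∪ {x}) := cl_mono hP Set.subset_union_left hmem
      have := mul_mem_cl hP hhom A (inv_mem_cl hP hhom A hx) h1'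
      simpa using this
    · intro hmem
      apply hgA
      have h1' : (g⁻¹)⁻¹ ∈ cl (↑A ∪ {g⁻¹}) := inv_cl hP hhom A g⁻¹
      rw [inv_inv] at h1'
      refine cl_trans hP ?_ h1'
      intro z hz
      simp only [Set.mem_union, Set.mem_singleton_iff] at hz
      rcases hz with hz | rfl
      · exact hP.1 _ hz
      · exact hmem
  intro x y
  obtain ⟨p, q, hp, hq, rfl⟩ := h8 x
  obtain ⟨r, s, hr, hs, rfl⟩ := h8 y
  have pr := h7 p r hp hr
  have ps := h7 p s hp hs
  have qr := h7 q r hq hr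
  have qs := h7 q s hq hs
  calc p * q * (r * s) = p * (q * r) * s := by group
  _ = p * (r * q) * s := by rw [qr]
  _ = p * r * (q * s) := by group
  _ = r * p * (s * q) := by rw [pr, qs]
  _ = r * (p * s) * q := by group
  _ = r * (s * p) * q := by rw [ps]
  _ = r * s * (p * q) := by group
end

section
/- Let G be a group with a homogeneous pregeometry cl and let A ⊆ G be finite. If a is generic over A ∪ {b} then a⁻¹ is generic over A ∪ {b}, i.e. a ∉ cl(A ∪ {b}) implies a⁻¹ ∉ cl(A ∪ {b}). -/
universe u

theorem stmt17 {G : Type u} [Group G] (cl : Set G → Set G) (hP : IsPregeometry cl)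
    (hinv : AutInvariant cl) (hhom : Homogeneous cl) (A : Finset G) (a b : G)
    (ha : a ∉ cl (↑A ∪ {b})) :
    a⁻¹ ∉ cl (↑A ∪ {b}) := by
  classical
  intro hainv
  obtain ⟨hsub, hmono, hidem, -, -⟩ := hP
  set F : Finset G := insert b (insert a⁻¹ A) with hF
  have hFsub : (↑F : Set G) ⊆ cl (↑A ∪ {b}) := by
    intro x hx
    simp only [hF, Finset.coe_insert, Set.mem_insert_iff] at hx
    rcases hx with rfl | rfl | hx
    · exact hsub _ (Or.inr rfl)
    · exact hainv
    · exact hsub _ (Or.inl hx)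
  have hclF : cl ↑F ⊆ cl (↑A ∪ {b}) := by
    have := hmono _ _ hFsub
    rwa [hidem] at this
  have haF : a ∉ cl ↑F := fun h => ha (hclF h)
  obtain ⟨c, hc⟩ : ∃ c, c ∉ cl ↑(insert a F) := by
    by_contra h
    push_neg at h
    exact hhom.1 (insert a F) (Set.eq_univ_of_forall h)
  have hcF : c ∉ cl ↑F := fun h => hc (hmono _ _ (by simp) h)
  obtain ⟨f, hfix, hfa⟩ := hhom.2 F a c haF hcF
  have hinvfix : f a⁻¹ = a⁻¹ := hfix a⁻¹ (by simp [hF])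
  rw [map_inv, hfa] at hinvfix
  have : c = a := inv_injective hinvfix
  exact hc (hsub _ (by simp [this]))
end

section
/- Let G be a group with a homogeneous pregeometry and suppose some element a ∉ cl(∅) satisfies: the centraliser C_G(a) contains an element generic over {a}. Then C_G(a) = G. -/
universe u

theorem stmt19 {G : Type u} [Group G] (cl : Set G → Set G) (hP : IsPregeometry cl)
    (hinv : AutInvariant cl) (hhom : Homogeneous cl) (a : G) (ha : a ∉ cl ∅)
    (hgen : ∃ x : G, x * a = a * x ∧ x ∉ cl {a}) :
    ∀ x : G, x * a = a * x := by
  classical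
  obtain ⟨x, hxa, hxg⟩ := hgen
  obtain ⟨hse, hmono, hidem, -, -⟩ := hP
  obtain ⟨hinf, hhom'⟩ := hhom
  -- Step 1: every element generic over {a} commutes with a.
  have key : ∀ y : G, y ∉ cl {a} → y * a = a * y := by
    intro y hy
    obtain ⟨f, hfA, hfx⟩ :=
      hhom' {a} x y (by simpa using hxg) (by simpa using hy)
    have hfa : f a = a := hfA a (Finset.mem_singleton_self a)
    calc y * a = f x * f a := by rw [hfx, hfa]
      _ = f (x * a) := (map_mul f x a).symm
      _ = f (a * x) := by rw [hxa]
      _ = a * y := by rw [map_mul, hfa, hfx]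
  intro y
  by_cases hy : y ∈ cl {a}
  · -- pick z generic over {a}
    obtain ⟨z, hz⟩ : ∃ z : G, z ∉ cl {a} := by
      have h := hinf ({a} : Finset G)
      rw [Finset.coe_singleton] at h
      exact Set.ne_univ_iff_exists_notMem _ |>.mp h
    have hz' := key z hz
    -- claim: y * z is generic over {a}
    have hyz : y * z ∉ cl {a} := by
      intro h
      have hsub : cl {y, y * z} ⊆ cl ({a} : Set G) := by
        have hss : ({y, y * z} : Set G) ⊆ cl {a} := by
          rintro t (rfl | rfl)
          · exact hy
          · exact h
        calc cl {y, y * z} ⊆ cl (cl ({a} : Set G)) := hmono _ _ hss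
          _ = cl {a} := hidem _
      have hzmem : z ∈ cl ({y, y * z} : Set G) := by
        by_contra hzc
        obtain ⟨v, hv⟩ : ∃ v : G, v ∉ cl (↑({y, y * z, z} : Finset G) : Set G) :=
          Set.ne_univ_iff_exists_notMem _ |>.mp (hinf _)
        have hco : (↑({y, y * z, z} : Finset G) : Set G) = {y, y * z, z} := by simp
        rw [hco] at hv
        have hvc : v ∉ cl ({y, y * z} : Set G) := fun hvm =>
          hv (hmono ({y, y * z} : Set G) {y, y * z, z}
            (by intro t ht; rcases ht with rfl | rfl
                · exact Or.inl rfl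
                · exact Or.inr (Or.inl rfl)) hvm)
        have hzc' : z ∉ cl (↑({y, y * z} : Finset G) : Set G) := by
          have : (↑({y, y * z} : Finset G) : Set G) = {y, y * z} := by simp
          rw [this]; exact hzc
        have hvc' : v ∉ cl (↑({y, y * z} : Finset G) : Set G) := by
          have : (↑({y, y * z} : Finset G) : Set G) = {y, y * z} := by simp
          rw [this]; exact hvc
        obtain ⟨f, hfA, hfz⟩ := hhom' {y, y * z} z v hzc' hvc'
        have hfy : f y = y := hfA y (by simp)
        have hfyz : f (y * z) = y * z := hfA (y * z) (by simp)
        have hfz' : f z = z := by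
          have h3 : f y * f z = y * z := by rw [← map_mul]; exact hfyz
          rw [hfy] at h3
          exact mul_left_cancel h3
        rw [hfz'] at hfz
        -- hfz : z = v, but v ∉ cl{y,y*z,z} while z ∈ that closure
        exact hv (hfz ▸ hse ({y, y * z, z} : Set G) (Or.inr (Or.inr rfl)))
      exact hz (hsub hzmem)
    have h1 := key _ hyz
    have h2 : y * a * z = a * y * z := by
      calc y * a * z = y * (a * z) := mul_assoc _ _ _
        _ = y * (z * a) := by rw [hz']
        _ = y * z * a := (mul_assoc _ _ _).symm
        _ = a * (y * z) := h1
        _ = a * y * z := (mul_assoc _ _ _).symm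
    exact mul_right_cancel h2
  · exact key y hy
end
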